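/- arXiv:2305.19727 — 5 statements merged into one kernel-verified Lean document; each statement's English description precedes it below -/
import Mathlib

section
/- Closed-form proximal update with marginal penalty: for γ, τ > 0, a ∈ ℝ^n with a_i > 0, and ξ ∈ ℝ^n with ξ_i > 0, the problem min_{s ≥ 0} τ·KL(s|a) + (1/γ)·KL(s|ξ) is uniquely minimized at s* = a^{τ/(1/γ+τ)} ⊙ ξ^{(1/γ)/(1/γ+τ)} (componentwise powers and product), i.e., s*_i = a_i^{γτ/(1+γτ)} ξ_i^{1/(1+γτ)}. -/
/-- `D(s|t) := s log(s/t) + t - s` is nonnegative for `s ≥ 0`, `t > 0`. -/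
lemma KLprox_D_nonneg {s t : ℝ} (hs : 0 ≤ s) (ht : 0 < t) :
    0 ≤ s * Real.log (s / t) + t - s := by
  rcases eq_or_lt_of_le hs with h | h
  · simp [← h]; linarith
  · have h1 : Real.log (t / s) ≤ t / s - 1 := Real.log_le_sub_one_of_pos (div_pos ht h)
    have h2 : Real.log (s / t) = - Real.log (t / s) := by
      rw [← Real.log_inv, inv_div]
    have h3 : s * (t / s) = t := by field_simp
    nlinarith [mul_le_mul_of_nonneg_left h1 hs]

/-- `D(s|t)` is positive when `s ≠ t`. -/
lemma KLprox_D_pos {s t : ℝ} (hs : 0 ≤ s) (ht : 0 < t) (hne : s ≠ t) :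
    0 < s * Real.log (s / t) + t - s := by
  rcases eq_or_lt_of_le hs with h | h
  · simp [← h]; linarith
  · have hts : t / s ≠ 1 := by
      intro hcontra
      apply hne
      field_simp at hcontra
      linarith
    have h1 : Real.log (t / s) < t / s - 1 :=
      Real.log_lt_sub_one_of_pos (div_pos ht h) hts
    have h2 : Real.log (s / t) = - Real.log (t / s) := by
      rw [← Real.log_inv, inv_div]
    have h3 : s * (t / s) = t := by field_simp
    nlinarith [mul_lt_mul_of_pos_left h1 h]

/-- Pointwise identity relating the objective at `s` and at the claimed minimizer `st`. -/
lemma KLprox_point_ident (τ γ a ξ st s : ℝ) (hs : 0 ≤ s) (ha : 0 < a) (hξ : 0 < ξ)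
    (hst : 0 < st)
    (H : (τ + 1/γ) * Real.log st = τ * Real.log a + (1/γ) * Real.log ξ) :
    τ * (s * Real.log (s / a) + a - s) + (1/γ) * (s * Real.log (s / ξ) + ξ - s) =
    (τ + 1/γ) * (s * Real.log (s / st) + st - s) +
    (τ * (st * Real.log (st / a) + a - st) + (1/γ) * (st * Real.log (st / ξ) + ξ - st)) := by
  rw [Real.log_div hst.ne' ha.ne', Real.log_div hst.ne' hξ.ne']
  rcases eq_or_lt_of_le hs with h | h
  · rw [← h]
    ring_nf
    linear_combination (-st) * H
  · rw [Real.log_div h.ne' ha.ne', Real.log_div h.ne' hξ.ne', Real.log_div h.ne' hst.ne']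
    linear_combination (s - st) * H

/-- `min_{s ≥ 0} τ·KL(s|a) + (1/γ)·KL(s|ξ)` is uniquely minimized at
`s*_i = a_i^{γτ/(1+γτ)} ξ_i^{1/(1+γτ)}`. -/
theorem KL_prox_marginal_penalty (n : ℕ) (γ τ : ℝ) (hγ : 0 < γ) (hτ : 0 < τ)
    (a ξ : Fin n → ℝ) (ha : ∀ i, 0 < a i) (hξ : ∀ i, 0 < ξ i) :
    let obj : (Fin n → ℝ) → ℝ := fun s =>
      τ * (∑ i, (s i * Real.log (s i / a i) + a i - s i)) +
      (1/γ) * (∑ i, (s i * Real.log (s i / ξ i) + ξ i - s i))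
    let sstar : Fin n → ℝ := fun i =>
      a i ^ (γ * τ / (1 + γ * τ)) * ξ i ^ (1 / (1 + γ * τ))
    (∀ s, (∀ i, 0 ≤ s i) → obj sstar ≤ obj s) ∧
    (∀ s, (∀ i, 0 ≤ s i) → obj s = obj sstar → s = sstar) := by
  intro obj sstar
  have hγτ : 0 < 1 + γ * τ := by positivity
  have hc : 0 < τ + 1/γ := by positivity
  have hst : ∀ i, 0 < sstar i := fun i =>
    mul_pos (Real.rpow_pos_of_pos (ha i) _) (Real.rpow_pos_of_pos (hξ i) _)
  have hlog : ∀ i, (τ + 1/γ) * Real.log (sstar i) =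
      τ * Real.log (a i) + (1/γ) * Real.log (ξ i) := by
    intro i
    have : Real.log (sstar i) = (γ * τ / (1 + γ * τ)) * Real.log (a i) +
        (1 / (1 + γ * τ)) * Real.log (ξ i) := by
      rw [show sstar i = a i ^ (γ * τ / (1 + γ * τ)) * ξ i ^ (1 / (1 + γ * τ)) from rfl,
        Real.log_mul (Real.rpow_pos_of_pos (ha i) _).ne' (Real.rpow_pos_of_pos (hξ i) _).ne',
        Real.log_rpow (ha i), Real.log_rpow (hξ i)]
    rw [this]
    field_simp
    ring
  have key : ∀ s : Fin n → ℝ, (∀ i, 0 ≤ s i) →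
      obj s = (τ + 1/γ) *
        (∑ i, (s i * Real.log (s i / sstar i) + sstar i - s i)) + obj sstar := by
    intro s hs
    show τ * _ + (1/γ) * _ = _
    rw [Finset.mul_sum, Finset.mul_sum, Finset.mul_sum,
      show obj sstar = τ * (∑ i, (sstar i * Real.log (sstar i / a i) + a i - sstar i)) +
        (1/γ) * (∑ i, (sstar i * Real.log (sstar i / ξ i) + ξ i - sstar i)) from rfl,
      Finset.mul_sum, Finset.mul_sum, ← Finset.sum_add_distrib, ← Finset.sum_add_distrib,
      ← Finset.sum_add_distrib]
    exact Finset.sum_congr rfl fun i _ =>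
      KLprox_point_ident τ γ (a i) (ξ i) (sstar i) (s i) (hs i) (ha i) (hξ i) (hst i) (hlog i)
  constructor
  · intro s hs
    rw [key s hs]
    have : 0 ≤ ∑ i, (s i * Real.log (s i / sstar i) + sstar i - s i) :=
      Finset.sum_nonneg fun i _ => KLprox_D_nonneg (hs i) (hst i)
    nlinarith
  · intro s hs heq
    rw [key s hs] at heq
    have h0 : (τ + 1/γ) * (∑ i, (s i * Real.log (s i / sstar i) + sstar i - s i)) = 0 := by
      linarith
    have hsum : ∑ i, (s i * Real.log (s i / sstar i) + sstar i - s i) = 0 :=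
      (mul_eq_zero.mp h0).resolve_left hc.ne'
    funext i
    by_contra hne
    have hpos : 0 < ∑ j, (s j * Real.log (s j / sstar j) + sstar j - s j) :=
      Finset.sum_pos' (fun j _ => KLprox_D_nonneg (hs j) (hst j))
        ⟨i, Finset.mem_univ i, KLprox_D_pos (hs i) (hst i) hne⟩
    linarith
end

section
/- Dual scaling update for the f-block: for γ, τ₁ > 0, a ∈ ℝ^n positive, ξ ∈ ℝ^{n×r} positive, and h₁ ∈ ℝ^r, the unique maximizer f₁ of the concave function f ↦ −τ₁⟨exp(−f/τ₁) − 1, a⟩ − (1/γ)⟨exp(γ f) ⊙ (ξ exp(γ h₁)), 1⟩ satisfies componentwise exp(γ f₁) = ( a / (ξ exp(γ h₁)) )^{τ₁/(τ₁ + 1/γ)}, where ξ exp(γ h₁) denotes the matrix-vector product of ξ with the componentwise exponential of γ h₁. -/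
/-!
The objective is separable: it is `∑ i, g_i (f i)` with
`g_i t = -τ₁ (e^{-t/τ₁} - 1) a_i - γ⁻¹ e^{γ t} c_i` and `c = ξ exp(γ h₁)`.
Each `g_i` is stationary at the point `s_i` where `e^{-s_i/τ₁} a_i = e^{γ s_i} c_i`, namely
`s_i = log (a_i / c_i) / (γ + 1/τ₁)`, and the tangent-line inequality for `exp` makes `s_i` its
strict global maximiser. Hence `s` is the unique maximiser of the sum, and
`e^{γ s_i} = (a_i / c_i)^{γ/(γ + 1/τ₁)}` with `γ/(γ + 1/τ₁) = τ₁/(τ₁ + 1/γ)`.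
-/

open Real

theorem Real.exp_mul_sub_lt_exp_sub {x y : ℝ} (h : y ≠ x) : exp x * (y - x) < exp y - exp x :=
  calc exp x * (y - x) = exp x * (y - x + 1) - exp x := by ring
    _ < exp x * exp (y - x) - exp x := by gcongr; exact add_one_lt_exp (sub_ne_zero.mpr h)
    _ = exp y - exp x := by rw [← exp_add, add_sub_cancel]

section Separable

variable {ι α M : Type*} [Fintype ι] [AddCommMonoid M] [PartialOrder M]
  [IsOrderedCancelAddMonoid M] {g : ι → α → M} {s : ι → α}

theorem sum_comp_lt_of_ne (hg : ∀ i t, t ≠ s i → g i t < g i (s i)) {f : ι → α} (hf : f ≠ s) :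
    ∑ i, g i (f i) < ∑ i, g i (s i) := by
  obtain ⟨i, hi⟩ := Function.ne_iff.mp hf
  refine Finset.sum_lt_sum (fun j _ => ?_) ⟨i, Finset.mem_univ i, hg i (f i) hi⟩
  by_cases hj : f j = s j
  · rw [hj]
  · exact (hg j (f j) hj).le

theorem sum_comp_le (hg : ∀ i t, t ≠ s i → g i t < g i (s i)) (f : ι → α) :
    ∑ i, g i (f i) ≤ ∑ i, g i (s i) := by
  by_cases hf : f = s
  · rw [hf]
  · exact (sum_comp_lt_of_ne hg hf).le

end Separable

noncomputable def scalingObjective (τ γ A C t : ℝ) : ℝ :=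
  -τ * ((exp (-t / τ) - 1) * A) - (1 / γ) * (exp (γ * t) * C)

noncomputable def scalingPoint (τ γ A C : ℝ) : ℝ :=
  log (A / C) / (γ + 1 / τ)

section Scaling

variable {τ γ A C : ℝ}

theorem scalingObjective_lt_of_stationary {s t : ℝ} (hτ : 0 < τ) (hγ : 0 < γ) (hA : 0 ≤ A)
    (hC : 0 < C) (hs : exp (-s / τ) * A = exp (γ * s) * C) (ht : t ≠ s) :
    scalingObjective τ γ A C t < scalingObjective τ γ A C s := by
  have hne₁ : -t / τ ≠ -s / τ := by
    intro h
    apply ht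
    field_simp at h
    linarith
  have hne₂ : γ * t ≠ γ * s := (mul_right_injective₀ hγ.ne').ne ht
  have h₁ := mul_le_mul_of_nonneg_left (exp_mul_sub_lt_exp_sub hne₁).le
    (by positivity : 0 ≤ τ * A)
  have h₂ := mul_lt_mul_of_pos_left (exp_mul_sub_lt_exp_sub hne₂) (by positivity : 0 < C / γ)
  have e₁ : τ * A * (exp (-s / τ) * (-t / τ - -s / τ)) = exp (-s / τ) * A * (s - t) := by
    field_simp
    ring
  have e₂ : C / γ * (exp (γ * s) * (γ * t - γ * s)) = exp (γ * s) * C * (t - s) := by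
    field_simp
  rw [e₁] at h₁
  rw [e₂, ← hs] at h₂
  unfold scalingObjective
  linear_combination h₁ + h₂

theorem scalingPoint_stationary (hτ : 0 < τ) (hγ : 0 < γ) (hA : 0 < A) (hC : 0 < C) :
    exp (-scalingPoint τ γ A C / τ) * A = exp (γ * scalingPoint τ γ A C) * C := by
  set s := scalingPoint τ γ A C
  have hsum : γ * s + s / τ = log (A / C) := by
    simp only [s, scalingPoint]
    field_simp
  have hA_eq : A = exp (γ * s) * exp (s / τ) * C := by
    rw [← exp_add, hsum, exp_log (div_pos hA hC)]
    field_simp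
  rw [hA_eq, neg_div, exp_neg]
  field_simp

theorem exp_mul_scalingPoint (hτ : 0 < τ) (hγ : 0 < γ) (hA : 0 < A) (hC : 0 < C) :
    exp (γ * scalingPoint τ γ A C) = (A / C) ^ (τ / (τ + 1 / γ)) := by
  rw [rpow_def_of_pos (div_pos hA hC), scalingPoint]
  congr 1
  field_simp

end Scaling

/-- Dual scaling update for the f-block: the unique maximizer `f₁` of
`f ↦ −τ₁⟨exp(−f/τ₁) − 1, a⟩ − (1/γ)⟨exp(γf) ⊙ (ξ exp(γh₁)), 1⟩` satisfies componentwise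
`exp(γ f₁) = (a / (ξ exp(γ h₁)))^{τ₁/(τ₁+1/γ)}`. -/
theorem dual_scaling_update_f_block (n r : ℕ) (hr : 0 < r) (γ τ₁ : ℝ)
    (hγ : 0 < γ) (hτ : 0 < τ₁)
    (a : Fin n → ℝ) (ha : ∀ i, 0 < a i)
    (ξ : Matrix (Fin n) (Fin r) ℝ) (hξ : ∀ i j, 0 < ξ i j) (h₁ : Fin r → ℝ) :
    let φ : (Fin n → ℝ) → ℝ := fun f =>
      -τ₁ * (∑ i, (Real.exp (-f i / τ₁) - 1) * a i) -
      (1/γ) * ∑ i, Real.exp (γ * f i) * (∑ j, ξ i j * Real.exp (γ * h₁ j))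
    ∃ f₁ : Fin n → ℝ,
      (∀ f, φ f ≤ φ f₁) ∧
      (∀ f', (∀ f, φ f ≤ φ f') → f' = f₁) ∧
      (∀ i, Real.exp (γ * f₁ i) =
        (a i / (∑ j, ξ i j * Real.exp (γ * h₁ j))) ^ (τ₁ / (τ₁ + 1/γ))) := by
  intro φ
  set c : Fin n → ℝ := fun i => ∑ j, ξ i j * exp (γ * h₁ j)
  have hc : ∀ i, 0 < c i := fun i =>
    Finset.sum_pos (fun j _ => mul_pos (hξ i j) (exp_pos _)) ⟨⟨0, hr⟩, Finset.mem_univ _⟩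
  have hφ : ∀ f, φ f = ∑ i, scalingObjective τ₁ γ (a i) (c i) (f i) := fun f => by
    simp only [φ, scalingObjective, c]
    rw [Finset.mul_sum, Finset.mul_sum, ← Finset.sum_sub_distrib]
  set s : Fin n → ℝ := fun i => scalingPoint τ₁ γ (a i) (c i)
  have hmax : ∀ i t, t ≠ s i →
      scalingObjective τ₁ γ (a i) (c i) t < scalingObjective τ₁ γ (a i) (c i) (s i) :=
    fun i _ ht => scalingObjective_lt_of_stationary hτ hγ (ha i).le (hc i)
      (scalingPoint_stationary hτ hγ (ha i) (hc i)) ht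
  refine ⟨s, fun f => ?_, fun f' hf' => ?_, fun i => exp_mul_scalingPoint hτ hγ (ha i) (hc i)⟩
  · rw [hφ, hφ]
    exact sum_comp_le hmax f
  · by_contra hne
    refine (hf' s).not_gt ?_
    rw [hφ, hφ]
    exact sum_comp_lt_of_ne hmax hne
end

section
/- Uniqueness of the translation maximizer: for γ, τ₁, τ₂ > 0, positive reals A₁, A₂, S, the function φ(λ₁, λ₂) = −τ₁ A₁ exp(−λ₁/τ₁) − τ₂ A₂ exp(−λ₂/τ₂) − (1/γ) S exp(γ(λ₁+λ₂)) is strictly concave on ℝ² and attains a unique maximum, characterized by the stationarity equations A₁ exp(−λ₁/τ₁) = S exp(γ(λ₁+λ₂)) and A₂ exp(−λ₂/τ₂) = S exp(γ(λ₁+λ₂)). -/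
/-!
φ(λ₁, λ₂) = g₁(λ₁) + g₂(λ₂) + h(λ₁ + λ₂) with g₁, g₂ strictly concave and h concave, so φ is
strictly concave and has at most one maximizer. At a stationary point the tangent-line bound
`exp x * (y - x) ≤ exp y - exp x` for each exponential term shows that the point is a global
maximizer, and in logarithms the stationarity equations are a linear system that is solved
through the sum `s = λ₁ + λ₂`.
-/

open Real Set

theorem StrictConcaveOn.add_prod {𝕜 E F β : Type*} [Semiring 𝕜] [PartialOrder 𝕜]
    [AddCommMonoid E] [AddCommMonoid F] [AddCommMonoid β] [PartialOrder β]
    [IsOrderedCancelAddMonoid β] [Module 𝕜 E] [Module 𝕜 F] [Module 𝕜 β]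
    {s : Set E} {t : Set F} {f : E → β} {g : F → β}
    (hf : StrictConcaveOn 𝕜 s f) (hg : StrictConcaveOn 𝕜 t g) :
    StrictConcaveOn 𝕜 (s ×ˢ t) fun p => f p.1 + g p.2 := by
  refine ⟨hf.1.prod hg.1, fun p hp q hq hpq a b ha hb hab => ?_⟩
  rw [smul_add, smul_add, add_add_add_comm]
  obtain h₁ | h₁ := eq_or_ne p.1 q.1
  · have h₂ : p.2 ≠ q.2 := fun h₂ => hpq (Prod.ext h₁ h₂)
    exact add_lt_add_of_le_of_lt (hf.concaveOn.2 hp.1 hq.1 ha.le hb.le hab)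
      (hg.2 hp.2 hq.2 h₂ ha hb hab)
  · exact add_lt_add_of_lt_of_le (hf.2 hp.1 hq.1 h₁ ha hb hab)
      (hg.concaveOn.2 hp.2 hq.2 ha.le hb.le hab)

theorem strictConcaveOn_mul_exp_mul {c k : ℝ} (hc : c < 0) (hk : k ≠ 0) :
    StrictConcaveOn ℝ univ fun x => c * exp (k * x) := by
  refine ⟨convex_univ, fun x _ y _ hxy a b ha hb hab => ?_⟩
  have hkxy : k * x ≠ k * y := (mul_right_injective₀ hk).ne hxy
  have := strictConvexOn_exp.2 (mem_univ _) (mem_univ _) hkxy ha hb hab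
  simp only [smul_eq_mul] at this ⊢
  rw [show k * (a * x + b * y) = a * (k * x) + b * (k * y) by ring]
  nlinarith

theorem exp_mul_sub_le_exp_sub_exp (x y : ℝ) : exp x * (y - x) ≤ exp y - exp x :=
  calc exp x * (y - x) ≤ exp x * (exp (y - x) - 1) :=
        mul_le_mul_of_nonneg_left (by linarith [add_one_le_exp (y - x)]) (exp_pos x).le
    _ = exp y - exp x := by rw [mul_sub, ← exp_add]; ring_nf

noncomputable def translationObjective (γ τ₁ τ₂ A₁ A₂ S : ℝ) (p : ℝ × ℝ) : ℝ :=
  -τ₁ * A₁ * exp (-p.1 / τ₁) - τ₂ * A₂ * exp (-p.2 / τ₂) -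
    (1/γ) * S * exp (γ * (p.1 + p.2))

theorem strictConcaveOn_translationObjective {γ τ₁ τ₂ A₁ A₂ S : ℝ} (hγ : 0 < γ) (hτ₁ : 0 < τ₁)
    (hτ₂ : 0 < τ₂) (hA₁ : 0 < A₁) (hA₂ : 0 < A₂) (hS : 0 < S) :
    StrictConcaveOn ℝ univ (translationObjective γ τ₁ τ₂ A₁ A₂ S) := by
  have hg₁ := strictConcaveOn_mul_exp_mul (neg_neg_of_pos (mul_pos hτ₁ hA₁))
    (neg_ne_zero.2 (inv_ne_zero hτ₁.ne'))
  have hg₂ := strictConcaveOn_mul_exp_mul (neg_neg_of_pos (mul_pos hτ₂ hA₂))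
    (neg_ne_zero.2 (inv_ne_zero hτ₂.ne'))
  have hh := (strictConcaveOn_mul_exp_mul (neg_neg_of_pos (mul_pos (inv_pos.2 hγ) hS))
    hγ.ne').concaveOn.comp_linearMap (LinearMap.fst ℝ ℝ ℝ + LinearMap.snd ℝ ℝ ℝ)
  have hg := hg₁.add_prod hg₂
  rw [univ_prod_univ] at hg
  refine (hg.add_concaveOn hh).congr fun p _ => ?_
  simp only [translationObjective, Pi.add_apply, Function.comp_apply, LinearMap.add_apply,
    LinearMap.fst_apply, LinearMap.snd_apply]
  ring_nf

theorem translationObjective_le_of_stationary {γ τ₁ τ₂ A₁ A₂ S : ℝ} (hγ : 0 < γ) (hτ₁ : 0 < τ₁)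
    (hτ₂ : 0 < τ₂) (hA₁ : 0 < A₁) (hA₂ : 0 < A₂) (hS : 0 < S) {p : ℝ × ℝ}
    (h₁ : A₁ * exp (-p.1 / τ₁) = S * exp (γ * (p.1 + p.2)))
    (h₂ : A₂ * exp (-p.2 / τ₂) = S * exp (γ * (p.1 + p.2))) (q : ℝ × ℝ) :
    translationObjective γ τ₁ τ₂ A₁ A₂ S q ≤ translationObjective γ τ₁ τ₂ A₁ A₂ S p := by
  have t₁ := mul_le_mul_of_nonneg_left (exp_mul_sub_le_exp_sub_exp (-p.1 / τ₁) (-q.1 / τ₁))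
    (mul_pos hτ₁ hA₁).le
  have t₂ := mul_le_mul_of_nonneg_left (exp_mul_sub_le_exp_sub_exp (-p.2 / τ₂) (-q.2 / τ₂))
    (mul_pos hτ₂ hA₂).le
  have t₃ := mul_le_mul_of_nonneg_left
    (exp_mul_sub_le_exp_sub_exp (γ * (p.1 + p.2)) (γ * (q.1 + q.2))) (div_pos hS hγ).le
  have e₁ : τ₁ * A₁ * (exp (-p.1 / τ₁) * (-q.1 / τ₁ - -p.1 / τ₁))
      = S * exp (γ * (p.1 + p.2)) * (p.1 - q.1) := by
    rw [← h₁]; field_simp; ring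
  have e₂ : τ₂ * A₂ * (exp (-p.2 / τ₂) * (-q.2 / τ₂ - -p.2 / τ₂))
      = S * exp (γ * (p.1 + p.2)) * (p.2 - q.2) := by
    rw [← h₂]; field_simp; ring
  have e₃ : S / γ * (exp (γ * (p.1 + p.2)) * (γ * (q.1 + q.2) - γ * (p.1 + p.2)))
      = S * exp (γ * (p.1 + p.2)) * (q.1 + q.2 - p.1 - p.2) := by
    field_simp; ring
  simp only [translationObjective]
  linear_combination t₁ + t₂ + t₃ - e₁ - e₂ - e₃

theorem exists_translation_stationary {γ τ₁ τ₂ A₁ A₂ S : ℝ} (hγ : 0 < γ) (hτ₁ : 0 < τ₁)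
    (hτ₂ : 0 < τ₂) (hA₁ : 0 < A₁) (hA₂ : 0 < A₂) (hS : 0 < S) :
    ∃ p : ℝ × ℝ, A₁ * exp (-p.1 / τ₁) = S * exp (γ * (p.1 + p.2)) ∧
      A₂ * exp (-p.2 / τ₂) = S * exp (γ * (p.1 + p.2)) := by
  set s := -(τ₁ * log (S / A₁) + τ₂ * log (S / A₂)) / (1 + γ * (τ₁ + τ₂))
  have hs : -τ₁ * (γ * s + log (S / A₁)) + -τ₂ * (γ * s + log (S / A₂)) = s := by
    have : 1 + γ * (τ₁ + τ₂) ≠ 0 := by positivity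
    simp only [s]; field_simp; ring
  have key : ∀ {A τ : ℝ}, 0 < A → 0 < τ →
      A * exp (-(-τ * (γ * s + log (S / A))) / τ) = S * exp (γ * s) := by
    intro A τ hA hτ
    rw [show -(-τ * (γ * s + log (S / A))) / τ = γ * s + log (S / A) by field_simp,
      exp_add, exp_log (div_pos hS hA)]
    field_simp
  exact ⟨(-τ₁ * (γ * s + log (S / A₁)), -τ₂ * (γ * s + log (S / A₂))),
    by rw [hs]; exact key hA₁ hτ₁, by rw [hs]; exact key hA₂ hτ₂⟩

/-- the translation objective `φ(λ₁,λ₂)` is strictly concave on `ℝ²`, attains a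
unique maximum, and maximizers are characterized by the stationarity equations. -/
theorem translation_maximizer_unique (γ τ₁ τ₂ A₁ A₂ S : ℝ)
    (hγ : 0 < γ) (hτ₁ : 0 < τ₁) (hτ₂ : 0 < τ₂)
    (hA₁ : 0 < A₁) (hA₂ : 0 < A₂) (hS : 0 < S) :
    let φ : ℝ × ℝ → ℝ := fun p =>
      -τ₁ * A₁ * Real.exp (-p.1 / τ₁) - τ₂ * A₂ * Real.exp (-p.2 / τ₂) -
      (1/γ) * S * Real.exp (γ * (p.1 + p.2))
    StrictConcaveOn ℝ Set.univ φ ∧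
    (∃! p : ℝ × ℝ, ∀ q, φ q ≤ φ p) ∧
    (∀ p : ℝ × ℝ, (∀ q, φ q ≤ φ p) ↔
      (A₁ * Real.exp (-p.1 / τ₁) = S * Real.exp (γ * (p.1 + p.2)) ∧
       A₂ * Real.exp (-p.2 / τ₂) = S * Real.exp (γ * (p.1 + p.2)))) := by
  intro φ
  have hconc : StrictConcaveOn ℝ univ φ :=
    strictConcaveOn_translationObjective hγ hτ₁ hτ₂ hA₁ hA₂ hS
  have hmax : ∀ p : ℝ × ℝ, A₁ * exp (-p.1 / τ₁) = S * exp (γ * (p.1 + p.2)) →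
      A₂ * exp (-p.2 / τ₂) = S * exp (γ * (p.1 + p.2)) → ∀ q, φ q ≤ φ p :=
    fun _ => translationObjective_le_of_stationary hγ hτ₁ hτ₂ hA₁ hA₂ hS
  obtain ⟨p₀, hp₀⟩ := exists_translation_stationary hγ hτ₁ hτ₂ hA₁ hA₂ hS
  have huniq : ∀ p, (∀ q, φ q ≤ φ p) → p = p₀ := fun p hp =>
    hconc.eq_of_isMaxOn (fun q _ => hp q) (fun q _ => hmax p₀ hp₀.1 hp₀.2 q) trivial trivial
  exact ⟨hconc, ⟨p₀, hmax p₀ hp₀.1 hp₀.2, huniq⟩,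
    fun p => ⟨fun hp => huniq p hp ▸ hp₀, fun h => hmax p h.1 h.2⟩⟩
end

section
/- Entropy absorption into KL: for γ, ε > 0 and positive vectors Q, ξ (of the same shape), (1/γ)·KL(Q|ξ) − ε·H(Q) = (1/γ_ε)·KL(Q|ξ_ε) + c, where γ_ε = 1/(1/γ + ε), ξ_ε = ξ^{γ_ε/γ} (componentwise power), H(Q) = −Σ_i Q_i (log Q_i − 1), and c = (1/γ)Σ_i ξ_i − (1/γ_ε)Σ_i (ξ_i)^{γ_ε/γ} is a constant independent of Q. -/
/-- entropy absorption into KL: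
`(1/γ)KL(Q|ξ) − εH(Q) = (1/γ_ε)KL(Q|ξ_ε) + c` with `γ_ε = 1/(1/γ+ε)`, `ξ_ε = ξ^{γ_ε/γ}`. -/
theorem entropy_absorption_identity (n : ℕ) (γ ε : ℝ) (hγ : 0 < γ) (hε : 0 < ε)
    (Q ξ : Fin n → ℝ) (hQ : ∀ i, 0 < Q i) (hξ : ∀ i, 0 < ξ i) :
    let γε : ℝ := 1 / (1/γ + ε)
    (1/γ) * (∑ i, (Q i * Real.log (Q i / ξ i) + ξ i - Q i)) -
      ε * (-∑ i, Q i * (Real.log (Q i) - 1)) =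
    (1/γε) * (∑ i, (Q i * Real.log (Q i / ξ i ^ (γε/γ)) + ξ i ^ (γε/γ) - Q i)) +
      ((1/γ) * ∑ i, ξ i - (1/γε) * ∑ i, ξ i ^ (γε/γ)) := by
  intro γε
  have hpos : (0:ℝ) < 1/γ + ε := by positivity
  have h1 : 1/γε = 1/γ + ε := by
    simp only [γε, one_div, inv_inv]
  have hγε : (0:ℝ) < γε := by simp only [γε]; positivity
  have h2 : (1/γ + ε) * (γε/γ) = 1/γ := by
    rw [← h1]; field_simp
  simp only [Finset.mul_sum, mul_neg, sub_neg_eq_add, ← Finset.sum_add_distrib,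
    ← Finset.sum_sub_distrib]
  refine Finset.sum_congr rfl fun i _ => ?_
  rw [Real.log_div (hQ i).ne' (hξ i).ne',
    Real.log_div (hQ i).ne' (Real.rpow_pos_of_pos (hξ i) (γε/γ)).ne',
    Real.log_rpow (hξ i)]
  simp only [γε]
  field_simp
  ring
end

section
/- Strong duality value for the f-block (Fenchel–Rockafellar instance): for γ, τ₁ > 0, positive a ∈ ℝⁿ and positive k ∈ ℝⁿ, min over s ≥ 0 of τ₁·KL(s|a) + (1/γ)·KL(s|k) equals sup over f ∈ ℝⁿ of −τ₁⟨exp(−f/τ₁) − 1, a⟩ − (1/γ)⟨exp(γf) − 1, k⟩, and both optima are attained. -/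
/-!
Both KL terms obey the Fenchel–Young inequality for `x ↦ x log (x / q) + q - x`, whose convex
conjugate is `u ↦ q (exp u - 1)`. Pairing `s` with `-f / τ₁` against `a` and with `γ f` against
`k`, the weighted pairings `τ₁ ⟨s, -f / τ₁⟩ + γ⁻¹ ⟨s, γ f⟩` cancel, which gives weak duality
`dual f ≤ primal s`. For the potential `f` with `exp (-f / τ₁) a = exp (γ f) k` and `s` that common
vector, both Fenchel–Young inequalities are equalities, so `primal s = dual f`, and weak duality
makes `s` and `f` optimal.
-/

open Real Finset InformationTheory

theorem mul_log_div_add_sub_eq_mul_klFun (x : ℝ) {y : ℝ} (hy : y ≠ 0) :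
    x * log (x / y) + y - x = y * klFun (x / y) := by
  rw [klFun]
  field_simp

theorem mul_le_mul_log_div_add_sub_add_exp {x a : ℝ} (u : ℝ) (hx : 0 ≤ x) (ha : 0 < a) :
    x * u ≤ (x * log (x / a) + a - x) + (exp u - 1) * a := by
  set y := exp u * a
  have hy : 0 < y := by positivity
  have hlog : x * log (x / a) = x * log (x / y) + x * u := by
    rcases hx.eq_or_lt with rfl | hx
    · simp
    · rw [log_div hx.ne' hy.ne', log_mul (exp_pos u).ne' ha.ne', log_exp, log_div hx.ne' ha.ne']
      ring
  have := mul_nonneg hy.le (klFun_nonneg (div_nonneg hx hy.le))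
  rw [← mul_log_div_add_sub_eq_mul_klFun x hy.ne'] at this
  linarith

theorem mul_eq_mul_log_div_add_sub_add_exp (u : ℝ) {a : ℝ} (ha : a ≠ 0) :
    exp u * a * u = (exp u * a * log (exp u * a / a) + a - exp u * a) + (exp u - 1) * a := by
  rw [mul_div_cancel_right₀ _ ha, log_exp]
  ring

theorem exists_exp_neg_div_mul_eq_exp_mul_mul {τ γ a k : ℝ} (hτ : 0 < τ) (hγ : 0 < γ)
    (ha : 0 < a) (hk : 0 < k) : ∃ f : ℝ, exp (-f / τ) * a = exp (γ * f) * k := by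
  refine ⟨τ * (log a - log k) / (1 + γ * τ), ?_⟩
  have : 1 + γ * τ ≠ 0 := by positivity
  calc exp (-(τ * (log a - log k) / (1 + γ * τ)) / τ) * a
      = exp (-(τ * (log a - log k) / (1 + γ * τ)) / τ + log a) := by rw [exp_add, exp_log ha]
    _ = exp (γ * (τ * (log a - log k) / (1 + γ * τ)) + log k) := by
        congr 1
        field_simp
        ring
    _ = exp (γ * (τ * (log a - log k) / (1 + γ * τ))) * k := by rw [exp_add, exp_log hk]

section GenKL

variable {ι : Type*} [Fintype ι]

noncomputable def genKL (p q : ι → ℝ) : ℝ :=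
  ∑ i, (p i * log (p i / q i) + q i - p i)

noncomputable def genKLConj (q u : ι → ℝ) : ℝ :=
  ∑ i, (exp (u i) - 1) * q i

theorem sum_mul_le_genKL_add_genKLConj {p q : ι → ℝ} (hp : ∀ i, 0 ≤ p i) (hq : ∀ i, 0 < q i)
    (u : ι → ℝ) : ∑ i, p i * u i ≤ genKL p q + genKLConj q u := by
  rw [genKL, genKLConj, ← sum_add_distrib]
  exact sum_le_sum fun i _ => mul_le_mul_log_div_add_sub_add_exp (u i) (hp i) (hq i)

theorem sum_mul_eq_genKL_add_genKLConj {q : ι → ℝ} (hq : ∀ i, q i ≠ 0) (u : ι → ℝ) :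
    ∑ i, exp (u i) * q i * u i = genKL (fun i => exp (u i) * q i) q + genKLConj q u := by
  rw [genKL, genKLConj, ← sum_add_distrib]
  exact sum_congr rfl fun i _ => mul_eq_mul_log_div_add_sub_add_exp (u i) (hq i)

end GenKL

section FBlock

variable {ι : Type*} [Fintype ι] {τ γ : ℝ} {a k : ι → ℝ}

noncomputable def fBlockPrimal (τ γ : ℝ) (a k s : ι → ℝ) : ℝ :=
  τ * genKL s a + 1 / γ * genKL s k

noncomputable def fBlockDual (τ γ : ℝ) (a k f : ι → ℝ) : ℝ :=
  -τ * genKLConj a (fun i => -f i / τ) - 1 / γ * genKLConj k (fun i => γ * f i)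

theorem fBlock_pairing_eq_zero (hτ : τ ≠ 0) (hγ : γ ≠ 0) (s f : ι → ℝ) :
    τ * ∑ i, s i * (-f i / τ) + 1 / γ * ∑ i, s i * (γ * f i) = 0 := by
  rw [mul_sum, mul_sum, ← sum_add_distrib]
  refine sum_eq_zero fun i _ => ?_
  field_simp
  ring

theorem fBlockDual_le_fBlockPrimal (hτ : 0 < τ) (hγ : 0 < γ) (ha : ∀ i, 0 < a i)
    (hk : ∀ i, 0 < k i) {s : ι → ℝ} (hs : ∀ i, 0 ≤ s i) (f : ι → ℝ) :
    fBlockDual τ γ a k f ≤ fBlockPrimal τ γ a k s := by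
  have hpair := fBlock_pairing_eq_zero hτ.ne' hγ.ne' s f
  have hfa := sum_mul_le_genKL_add_genKLConj hs ha fun i => -f i / τ
  have hfk := sum_mul_le_genKL_add_genKLConj hs hk fun i => γ * f i
  rw [fBlockDual, fBlockPrimal]
  linarith [mul_le_mul_of_nonneg_left hfa hτ.le,
    mul_le_mul_of_nonneg_left hfk (one_div_pos.2 hγ).le]

theorem fBlockPrimal_eq_fBlockDual (hτ : τ ≠ 0) (hγ : γ ≠ 0) (ha : ∀ i, a i ≠ 0)
    (hk : ∀ i, k i ≠ 0) {f : ι → ℝ} (hf : ∀ i, exp (-f i / τ) * a i = exp (γ * f i) * k i) :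
    fBlockPrimal τ γ a k (fun i => exp (-f i / τ) * a i) = fBlockDual τ γ a k f := by
  have hpair := fBlock_pairing_eq_zero hτ hγ (fun i => exp (-f i / τ) * a i) f
  have hfa := sum_mul_eq_genKL_add_genKLConj ha fun i => -f i / τ
  have hfk := sum_mul_eq_genKL_add_genKLConj hk fun i => γ * f i
  simp only [← hf] at hfk
  rw [fBlockDual, fBlockPrimal]
  linear_combination hpair - τ * hfa - 1 / γ * hfk

theorem fBlock_strong_duality (hτ : 0 < τ) (hγ : 0 < γ) (ha : ∀ i, 0 < a i)
    (hk : ∀ i, 0 < k i) :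
    ∃ s f : ι → ℝ, (∀ i, 0 ≤ s i) ∧
      (∀ s', (∀ i, 0 ≤ s' i) → fBlockPrimal τ γ a k s ≤ fBlockPrimal τ γ a k s') ∧
      (∀ f', fBlockDual τ γ a k f' ≤ fBlockDual τ γ a k f) ∧
      fBlockPrimal τ γ a k s = fBlockDual τ γ a k f := by
  choose f hf using fun i => exists_exp_neg_div_mul_eq_exp_mul_mul hτ hγ (ha i) (hk i)
  have hs : ∀ i, 0 ≤ exp (-f i / τ) * a i := fun i => (mul_pos (exp_pos _) (ha i)).le
  have heq := fBlockPrimal_eq_fBlockDual hτ.ne' hγ.ne' (fun i => (ha i).ne')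
    (fun i => (hk i).ne') hf
  refine ⟨_, f, hs, fun s' hs' => ?_, fun f' => ?_, heq⟩
  · exact heq ▸ fBlockDual_le_fBlockPrimal hτ hγ ha hk hs' f
  · exact heq ▸ fBlockDual_le_fBlockPrimal hτ hγ ha hk hs f'

end FBlock

/-- strong duality value for the f-block:
`min_{s ≥ 0} τ₁ KL(s|a) + (1/γ) KL(s|k) = sup_f −τ₁⟨exp(−f/τ₁)−1, a⟩ − (1/γ)⟨exp(γf)−1, k⟩`,
with both optima attained. -/
theorem f_block_strong_duality (n : ℕ) (γ τ₁ : ℝ) (hγ : 0 < γ) (hτ : 0 < τ₁)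
    (a k : Fin n → ℝ) (ha : ∀ i, 0 < a i) (hk : ∀ i, 0 < k i) :
    let KL : (Fin n → ℝ) → (Fin n → ℝ) → ℝ := fun p q =>
      ∑ i, (p i * Real.log (p i / q i) + q i - p i)
    let primal : (Fin n → ℝ) → ℝ := fun s => τ₁ * KL s a + (1/γ) * KL s k
    let dual : (Fin n → ℝ) → ℝ := fun f =>
      -τ₁ * (∑ i, (Real.exp (-f i / τ₁) - 1) * a i) -
      (1/γ) * (∑ i, (Real.exp (γ * f i) - 1) * k i)
    ∃ s f : Fin n → ℝ, (∀ i, 0 ≤ s i) ∧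
      (∀ s', (∀ i, 0 ≤ s' i) → primal s ≤ primal s') ∧
      (∀ f', dual f' ≤ dual f) ∧
      primal s = dual f :=
  fBlock_strong_duality hτ hγ ha hk
end
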